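/- Given a bounded continuous function f = (f_1,…,f_m) on the m-star, define for each i the reflection-extension f̃_i : ℝ → ℝ by f̃_i(x) = f_i(x) for x ≥ 0 and f̃_i(x) = (2/m) Σ_{j=1}^m f_j(-x) - f_i(-x) for x ≤ 0. Then for each i, j the function x ↦ f̃_i(x) - f̃_j(-x) is odd, and the function x ↦ Σ_{i=1}^m f̃_i(x) is even. -/

import Mathlib

/-!
Write `c(x) = (2/m) ∑ⱼ fⱼ(|x|)`. By construction `F̃ᵢ(x) + F̃ᵢ(-x) = c(x)` for every `i`, and this
common even part immediately makes `x ↦ F̃ᵢ(x) - F̃ⱼ(-x)` odd. Summing the definition over `i` on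
`x ≤ 0` gives `m · (2/m) ∑ⱼ fⱼ(-x) - ∑ᵢ fᵢ(-x) = ∑ᵢ fᵢ(-x)`, so `∑ᵢ F̃ᵢ(x) = ∑ᵢ fᵢ(|x|)`, which is even.
-/

open Finset

theorem sum_two_div_card_mul_sum_sub {ι : Type*} [Fintype ι] (g : ι → ℝ) :
    ∑ i, (2 / Fintype.card ι * ∑ j, g j - g i) = ∑ i, g i := by
  rcases isEmpty_or_nonempty ι with hι | hι
  · simp
  · rw [sum_sub_distrib, sum_const, card_univ, nsmul_eq_mul]
    field_simp
    ring

section ReflectionExtension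

variable {ι : Type*} [Fintype ι] {f F : ι → ℝ → ℝ}

theorem reflectionExtension_add_neg (a : ℝ)
    (hFpos : ∀ i x, 0 ≤ x → F i x = f i x)
    (hFneg : ∀ i x, x ≤ 0 → F i x = a * ∑ j, f j (-x) - f i (-x)) (i : ι) (x : ℝ) :
    F i x + F i (-x) = a * ∑ j, f j |x| := by
  rcases le_total 0 x with hx | hx
  · rw [hFpos i x hx, hFneg i (-x) (by linarith), abs_of_nonneg hx]
    simp only [neg_neg]
    ring
  · rw [hFneg i x hx, hFpos i (-x) (by linarith), abs_of_nonpos hx]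
    ring

theorem reflectionExtension_sum
    (hFpos : ∀ i x, 0 ≤ x → F i x = f i x)
    (hFneg : ∀ i x, x ≤ 0 → F i x = 2 / Fintype.card ι * ∑ j, f j (-x) - f i (-x)) (x : ℝ) :
    ∑ i, F i x = ∑ i, f i |x| := by
  rcases le_total 0 x with hx | hx
  · rw [abs_of_nonneg hx]
    exact sum_congr rfl fun i _ ↦ hFpos i x hx
  · rw [abs_of_nonpos hx, ← sum_two_div_card_mul_sum_sub fun i ↦ f i (-x)]
    exact sum_congr rfl fun i _ ↦ hFneg i x hx

end ReflectionExtension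

theorem reflection_extension_parity_general (m : ℕ)
    (f : Fin m → ℝ → ℝ)
    (F : Fin m → ℝ → ℝ)
    (hFpos : ∀ i : Fin m, ∀ x : ℝ, 0 ≤ x → F i x = f i x)
    (hFneg : ∀ i : Fin m, ∀ x : ℝ, x ≤ 0 →
      F i x = (2 / m) * (∑ j : Fin m, f j (-x)) - f i (-x)) :
    (∀ i j : Fin m, ∀ x : ℝ, F i (-x) - F j x = -(F i x - F j (-x))) ∧
      (∀ x : ℝ, ∑ i : Fin m, F i (-x) = ∑ i : Fin m, F i x) := by
  have hFneg' : ∀ i x, x ≤ 0 →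
      F i x = 2 / Fintype.card (Fin m) * ∑ j, f j (-x) - f i (-x) := by
    simpa only [Fintype.card_fin] using hFneg
  refine ⟨fun i j x ↦ ?_, fun x ↦ ?_⟩
  · have hi := reflectionExtension_add_neg _ hFpos hFneg i x
    have hj := reflectionExtension_add_neg _ hFpos hFneg j x
    linarith
  · rw [reflectionExtension_sum hFpos hFneg', reflectionExtension_sum hFpos hFneg', abs_neg]

theorem reflection_extension_parity (m : ℕ) (hm : 1 ≤ m)
    (f : Fin m → ℝ → ℝ) (hc : ∀ i j : Fin m, f i 0 = f j 0)
    (F : Fin m → ℝ → ℝ)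
    (hFpos : ∀ i : Fin m, ∀ x : ℝ, 0 ≤ x → F i x = f i x)
    (hFneg : ∀ i : Fin m, ∀ x : ℝ, x ≤ 0 →
      F i x = (2 / m) * (∑ j : Fin m, f j (-x)) - f i (-x)) :
    (∀ i j : Fin m, ∀ x : ℝ, F i (-x) - F j x = -(F i x - F j (-x))) ∧
      (∀ x : ℝ, ∑ i : Fin m, F i (-x) = ∑ i : Fin m, F i x) :=
  reflection_extension_parity_general m f F hFpos hFneg
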